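/- arXiv:2101.03390 — 2 statements merged into one kernel-verified Lean document; each statement's English description precedes it below -/
import Mathlib

section
/- There exists a constant C > 0 such that for every natural number p and every continuously differentiable function u : ℝ → ℝ on [-1, 1], if P is a real polynomial of degree at most p satisfying ∫_{-1}^{1} (u(x) - P(x)) r(x) dx = 0 for every real polynomial r of degree at most p (i.e. P is the L²(-1,1)-orthogonal projection of u onto polynomials of degree at most p), then |u(1) - P(1)| ≤ C (p+1)^{-1/2} ‖u'‖_{L²(-1,1)} and |u(-1) - P(-1)| ≤ C (p+1)^{-1/2} ‖u'‖_{L²(-1,1)}. -/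
/-!
Write `A = u(1) - P(1)` and `B = u(-1) - P(-1)`. For `n ∈ {p, p + 1}` the Legendre polynomial
`Lₙ` has `Lₙ'` of degree `≤ p` and is orthogonal to `P'`, so one integration by parts against
`u - P` gives `∫ u' Lₙ = A - (-1)ⁿ B`. By Cauchy–Schwarz and `‖Lₙ‖² = 2 / (2n + 1)` both
`A - (-1)ᵖ B` and `A + (-1)ᵖ B` are at most `√2 (p + 1)^{-1/2} ‖u'‖` in absolute value,
hence so are `A` and `B`.
-/

open Polynomial MeasureTheory Set
open scoped Nat

theorem sq_integral_mul_le {α : Type*} [MeasurableSpace α] {μ : Measure α} {f g : α → ℝ}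
    (hf : Integrable (fun x => f x ^ 2) μ) (hg : Integrable (fun x => g x ^ 2) μ)
    (hfg : Integrable (fun x => f x * g x) μ) :
    (∫ x, f x * g x ∂μ) ^ 2 ≤ (∫ x, f x ^ 2 ∂μ) * ∫ x, g x ^ 2 ∂μ := by
  have hquad : ∀ t : ℝ, 0 ≤ (∫ x, f x ^ 2 ∂μ) * (t * t) + 2 * (∫ x, f x * g x ∂μ) * t +
      ∫ x, g x ^ 2 ∂μ := by
    intro t
    have hexpand : ∫ x, (t * f x + g x) ^ 2 ∂μ = (∫ x, f x ^ 2 ∂μ) * (t * t) +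
        2 * (∫ x, f x * g x ∂μ) * t + ∫ x, g x ^ 2 ∂μ := by
      have hpt : ∀ x, (t * f x + g x) ^ 2 = t * t * f x ^ 2 + 2 * t * (f x * g x) + g x ^ 2 :=
        fun x => by ring
      have hint : Integrable (fun x => t * t * f x ^ 2 + 2 * t * (f x * g x)) μ :=
        (hf.const_mul _).add (hfg.const_mul _)
      simp only [hpt]
      rw [integral_add hint hg, integral_add (hf.const_mul _) (hfg.const_mul _),
        integral_const_mul, integral_const_mul]
      ring
    exact hexpand ▸ integral_nonneg fun x => sq_nonneg _
  have hdiscr := discrim_le_zero hquad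
  rw [discrim] at hdiscr
  nlinarith

theorem abs_intervalIntegral_mul_le {a b : ℝ} (hab : a ≤ b) {f g : ℝ → ℝ}
    (hf : ContinuousOn f (Icc a b)) (hg : ContinuousOn g (Icc a b)) :
    |∫ x in a..b, f x * g x| ≤ √(∫ x in a..b, f x ^ 2) * √(∫ x in a..b, g x ^ 2) := by
  have hint : ∀ {h : ℝ → ℝ}, ContinuousOn h (Icc a b) → IntegrableOn h (Ioc a b) := fun hh =>
    (hh.integrableOn_Icc).mono_set Ioc_subset_Icc_self
  simp only [intervalIntegral.integral_of_le hab]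
  rw [← Real.sqrt_mul (integral_nonneg fun x => sq_nonneg _)]
  exact Real.abs_le_sqrt (sq_integral_mul_le (hint (hf.pow 2)) (hint (hg.pow 2)) (hint (hf.mul hg)))

theorem integral_one_sub_sq_pow_succ (n : ℕ) :
    (2 * n + 3 : ℝ) * ∫ x in (-1 : ℝ)..1, (1 - x ^ 2) ^ (n + 1) =
      (2 * n + 2) * ∫ x in (-1 : ℝ)..1, (1 - x ^ 2) ^ n := by
  have hderiv : ∀ x : ℝ, HasDerivAt (fun x => x * (1 - x ^ 2) ^ (n + 1))
      ((2 * n + 3) * (1 - x ^ 2) ^ (n + 1) - (2 * n + 2) * (1 - x ^ 2) ^ n) x := by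
    intro x
    refine ((hasDerivAt_id' x).fun_mul
      (((hasDerivAt_pow 2 x).const_sub 1).fun_pow (n + 1))).congr_deriv ?_
    push_cast
    ring
  have hFTC := intervalIntegral.integral_eq_sub_of_hasDerivAt (a := -1) (b := 1)
    (fun x _ => hderiv x) (by apply Continuous.intervalIntegrable; fun_prop)
  rw [intervalIntegral.integral_sub, intervalIntegral.integral_const_mul,
    intervalIntegral.integral_const_mul] at hFTC
  · norm_num at hFTC
    linarith
  all_goals apply Continuous.intervalIntegrable; fun_prop

theorem integral_one_sub_sq_pow (n : ℕ) :
    ∫ x in (-1 : ℝ)..1, (1 - x ^ 2) ^ n = 2 ^ (2 * n + 1) * (n ! : ℝ) ^ 2 / (2 * n + 1)! := by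
  induction n with
  | zero => norm_num
  | succ n ih =>
    have hrec := integral_one_sub_sq_pow_succ n
    rw [ih] at hrec
    have hf : ((2 * (n + 1) + 1)! : ℝ) = (2 * n + 3) * (2 * n + 2) * (2 * n + 1)! := by
      rw [show 2 * (n + 1) + 1 = (2 * n + 1) + 1 + 1 by ring, Nat.factorial_succ,
        Nat.factorial_succ]
      push_cast; ring
    rw [hf, Nat.factorial_succ, eq_div_iff (by positivity)]
    field_simp at hrec
    push_cast
    linear_combination (2 * (n : ℝ) + 2) * hrec

theorem abs_le_of_abs_sub_le_of_abs_add_le {a b M : ℝ} (hsub : |a - b| ≤ M) (hadd : |a + b| ≤ M) :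
    |a| ≤ M ∧ |b| ≤ M := by
  simp only [abs_le] at hsub hadd ⊢
  exact ⟨⟨by linarith, by linarith⟩, by linarith, by linarith⟩

namespace Polynomial

section CommRing

variable {R : Type*} [CommRing R]

theorem eval_iterate_derivative_X_sub_C_pow_mul_of_lt (c : R) (g : R[X]) {j n : ℕ} (hj : j < n) :
    (derivative^[j] ((X - C c) ^ n * g)).eval c = 0 := by
  have hdvd : (X - C c) ^ (n - j) ∣ derivative^[j] ((X - C c) ^ n * g) :=
    pow_sub_dvd_iterate_derivative_of_pow_dvd j (dvd_mul_right _ _)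
  exact dvd_iff_isRoot.mp ((dvd_pow_self _ (Nat.sub_ne_zero_of_lt hj)).trans hdvd)

theorem eval_iterate_derivative_X_sub_C_pow_mul_self (c : R) (g : R[X]) (n : ℕ) :
    (derivative^[n] ((X - C c) ^ n * g)).eval c = n ! * g.eval c := by
  rw [iterate_derivative_mul, eval_finsetSum,
    Finset.sum_eq_single_of_mem 0 (Finset.mem_range.mpr n.succ_pos)]
  · simp [iterate_derivative_X_sub_pow_self]
  · intro k hk hk0
    rw [iterate_derivative_X_sub_pow, Nat.sub_sub_self (Finset.mem_range_succ_iff.mp hk)]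
    simp [zero_pow hk0]

end CommRing

section Semiring

variable {R : Type*} [Semiring R]

theorem Monic.iterate_derivative_natDegree {p : R[X]} (hp : p.Monic) :
    derivative^[p.natDegree] p = (p.natDegree ! : R[X]) := by
  have hdeg : (derivative^[p.natDegree] p).natDegree = 0 := by
    simpa using natDegree_iterate_derivative p p.natDegree
  rw [eq_C_of_natDegree_eq_zero hdeg, coeff_iterate_derivative, zero_add,
    Nat.descFactorial_self, hp.coeff_natDegree]
  simp

theorem degree_derivative_lt_of_natDegree_le {p : R[X]} {n : ℕ} (hp : p.natDegree ≤ n) :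
    p.derivative.degree < n := by
  rcases eq_or_ne p 0 with rfl | hp0
  · simp
  · exact (degree_derivative_lt hp0).trans_le (degree_le_of_natDegree_le hp)

end Semiring

theorem integral_eval_mul_eval_derivative (q p : ℝ[X]) (a b : ℝ) :
    ∫ x in a..b, q.eval x * p.derivative.eval x =
      q.eval b * p.eval b - q.eval a * p.eval a -
        ∫ x in a..b, q.derivative.eval x * p.eval x :=
  intervalIntegral.integral_mul_deriv_eq_deriv_mul (fun x _ => q.hasDerivAt x)
    (fun x _ => p.hasDerivAt x) (q.derivative.continuous.intervalIntegrable _ _)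
    (p.derivative.continuous.intervalIntegrable _ _)

theorem integral_eval_mul_eval_iterate_derivative {p : ℝ[X]} {a b : ℝ} {m : ℕ}
    (hp : ∀ j < m, (derivative^[j] p).eval a = 0 ∧ (derivative^[j] p).eval b = 0) (q : ℝ[X]) :
    ∫ x in a..b, q.eval x * (derivative^[m] p).eval x =
      (-1) ^ m * ∫ x in a..b, (derivative^[m] q).eval x * p.eval x := by
  induction m generalizing q with
  | zero => simp
  | succ m ih =>
    obtain ⟨hpa, hpb⟩ := hp m m.lt_succ_self
    rw [Function.iterate_succ_apply', integral_eval_mul_eval_derivative, hpa, hpb,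
      ih (fun j hj => hp j (hj.trans m.lt_succ_self)), Function.iterate_succ_apply]
    ring

noncomputable def legendre (n : ℕ) : ℝ[X] :=
  C (2 ^ n * n ! : ℝ)⁻¹ * derivative^[n] ((X ^ 2 - 1) ^ n)

theorem X_sq_sub_one_pow_eq (n : ℕ) :
    ((X ^ 2 - 1) ^ n : ℝ[X]) = (X - C 1) ^ n * (X - C (-1)) ^ n := by
  rw [← mul_pow]; congr 1; simp only [map_one, map_neg]; ring

theorem monic_X_sq_sub_one_pow (n : ℕ) : ((X ^ 2 - 1) ^ n : ℝ[X]).Monic := by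
  simpa using (monic_X_pow_sub_C (1 : ℝ) two_ne_zero).pow n

theorem natDegree_X_sq_sub_one_pow (n : ℕ) : ((X ^ 2 - 1) ^ n : ℝ[X]).natDegree = 2 * n := by
  rw [natDegree_pow, ← C_1, natDegree_X_pow_sub_C, mul_comm]

theorem eval_iterate_derivative_X_sq_sub_one_pow_of_lt {j n : ℕ} (hj : j < n) :
    (derivative^[j] ((X ^ 2 - 1) ^ n : ℝ[X])).eval 1 = 0 ∧
      (derivative^[j] ((X ^ 2 - 1) ^ n : ℝ[X])).eval (-1) = 0 := by
  rw [X_sq_sub_one_pow_eq]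
  refine ⟨eval_iterate_derivative_X_sub_C_pow_mul_of_lt _ _ hj, ?_⟩
  rw [mul_comm]
  exact eval_iterate_derivative_X_sub_C_pow_mul_of_lt _ _ hj

theorem legendre_eval_one (n : ℕ) : (legendre n).eval 1 = 1 := by
  rw [legendre, eval_mul, eval_C, X_sq_sub_one_pow_eq, eval_iterate_derivative_X_sub_C_pow_mul_self]
  simp only [eval_pow, eval_sub, eval_X, eval_C]
  field_simp
  norm_num

theorem legendre_eval_neg_one (n : ℕ) : (legendre n).eval (-1) = (-1) ^ n := by
  rw [legendre, eval_mul, eval_C, X_sq_sub_one_pow_eq, mul_comm ((X - C 1) ^ n),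
    eval_iterate_derivative_X_sub_C_pow_mul_self]
  simp only [eval_pow, eval_sub, eval_X, eval_C]
  field_simp
  norm_num [← mul_pow]

theorem natDegree_legendre_le (n : ℕ) : (legendre n).natDegree ≤ n := by
  refine (natDegree_C_mul_le _ _).trans ((natDegree_iterate_derivative _ n).trans ?_)
  rw [natDegree_X_sq_sub_one_pow]
  omega

theorem integral_eval_mul_legendre (q : ℝ[X]) (n : ℕ) :
    ∫ x in (-1 : ℝ)..1, q.eval x * (legendre n).eval x =
      (2 ^ n * n ! : ℝ)⁻¹ * (-1) ^ n *
        ∫ x in (-1 : ℝ)..1, (derivative^[n] q).eval x * ((X ^ 2 - 1) ^ n : ℝ[X]).eval x := by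
  simp only [legendre, eval_mul, eval_C, mul_left_comm (q.eval _)]
  rw [intervalIntegral.integral_const_mul, mul_assoc,
    integral_eval_mul_eval_iterate_derivative fun j hj =>
      (eval_iterate_derivative_X_sq_sub_one_pow_of_lt hj).symm]

theorem integral_eval_mul_legendre_eq_zero {q : ℝ[X]} {n : ℕ} (hq : q.degree < n) :
    ∫ x in (-1 : ℝ)..1, q.eval x * (legendre n).eval x = 0 := by
  simp [integral_eval_mul_legendre, iterate_derivative_eq_zero_of_degree_lt hq]

theorem iterate_derivative_legendre (n : ℕ) :
    derivative^[n] (legendre n) = C ((2 ^ n * n ! : ℝ)⁻¹ * (2 * n)!) := by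
  rw [legendre, iterate_derivative_C_mul, ← Function.iterate_add_apply, ← two_mul,
    ← natDegree_X_sq_sub_one_pow, (monic_X_sq_sub_one_pow n).iterate_derivative_natDegree,
    natDegree_X_sq_sub_one_pow, ← C_eq_natCast, ← C_mul]

theorem integral_legendre_sq (n : ℕ) :
    ∫ x in (-1 : ℝ)..1, (legendre n).eval x ^ 2 = 2 / (2 * n + 1) := by
  have hsign : ∀ x : ℝ, (-1) ^ n * ((X ^ 2 - 1) ^ n : ℝ[X]).eval x = (1 - x ^ 2) ^ n := by
    intro x
    simp only [eval_pow, eval_sub, eval_X, eval_one, ← mul_pow]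
    ring
  calc ∫ x in (-1 : ℝ)..1, (legendre n).eval x ^ 2
      = ∫ x in (-1 : ℝ)..1, (legendre n).eval x * (legendre n).eval x := by simp only [sq]
    _ = (2 ^ n * n ! : ℝ)⁻¹ * ((2 ^ n * n ! : ℝ)⁻¹ * (2 * n)!) *
          ∫ x in (-1 : ℝ)..1, (1 - x ^ 2) ^ n := by
      simp only [integral_eval_mul_legendre, iterate_derivative_legendre, eval_C,
        intervalIntegral.integral_const_mul, ← hsign]
      ring
    _ = 2 / (2 * n + 1) := by
      rw [integral_one_sub_sq_pow, Nat.factorial_succ]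
      push_cast
      field_simp
      ring

end Polynomial

theorem integral_derivWithin_mul_eval_eq_of_orthogonal {a b : ℝ} (hab : a < b) {p : ℕ}
    {u : ℝ → ℝ} (hu : ContDiffOn ℝ 1 u (Icc a b)) {P q : ℝ[X]}
    (horth : ∀ r : ℝ[X], r.natDegree ≤ p → ∫ x in a..b, (u x - P.eval x) * r.eval x = 0)
    (hq : q.derivative.natDegree ≤ p)
    (hPq : ∫ x in a..b, P.derivative.eval x * q.eval x = 0) :
    ∫ x in a..b, derivWithin u (Icc a b) x * q.eval x =
      (u b - P.eval b) * q.eval b - (u a - P.eval a) * q.eval a := by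
  have hu' : ContinuousOn (derivWithin u (Icc a b)) (Icc a b) :=
    hu.continuousOn_derivWithin (uniqueDiffOn_Icc hab) le_rfl
  have hint : ∀ {h : ℝ → ℝ}, ContinuousOn h (Icc a b) → IntervalIntegrable h volume a b :=
    fun hh => hh.intervalIntegrable_of_Icc hab.le
  -- integrate by parts once against the error `u - P`, whose moments up to degree `p` vanish
  have hparts := intervalIntegral.integral_mul_deriv_eq_deriv_mul_of_hasDerivWithinAt
    (u := fun x => u x - P.eval x) (u' := fun x => derivWithin u (Icc a b) x - P.derivative.eval x)
    (v := fun x => q.eval x) (v' := fun x => q.derivative.eval x)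
    (fun x hx => by
      rw [uIcc_of_le hab.le] at hx ⊢
      exact ((hu.differentiableOn one_ne_zero x hx).hasDerivWithinAt).sub
        (P.hasDerivAt x).hasDerivWithinAt)
    (fun x _ => (q.hasDerivAt x).hasDerivWithinAt)
    (hint (hu'.sub P.derivative.continuous.continuousOn))
    (q.derivative.continuous.intervalIntegrable _ _)
  have hsplit : ∫ x in a..b, (derivWithin u (Icc a b) x - P.derivative.eval x) * q.eval x =
      ∫ x in a..b, derivWithin u (Icc a b) x * q.eval x := by
    simp only [sub_mul]
    rw [intervalIntegral.integral_sub (hint (hu'.fun_mul q.continuous.continuousOn))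
      ((P.derivative.continuous.fun_mul q.continuous).intervalIntegrable _ _), hPq, sub_zero]
  rw [horth _ hq, hsplit] at hparts
  linarith

theorem abs_sub_neg_one_pow_mul_le_of_orthogonal {p n : ℕ} (hpn : p ≤ n) (hnp : n ≤ p + 1)
    {u : ℝ → ℝ} (hu : ContDiffOn ℝ 1 u (Icc (-1) 1)) {P : ℝ[X]} (hP : P.natDegree ≤ p)
    (horth : ∀ r : ℝ[X], r.natDegree ≤ p →
      ∫ x in (-1 : ℝ)..1, (u x - P.eval x) * r.eval x = 0) :
    |(u 1 - P.eval 1) - (-1) ^ n * (u (-1) - P.eval (-1))| ≤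
      √(∫ x in (-1 : ℝ)..1, (derivWithin u (Icc (-1 : ℝ) 1) x) ^ 2) * √(2 / (2 * n + 1)) := by
  have hu' : ContinuousOn (derivWithin u (Icc (-1 : ℝ) 1)) (Icc (-1) 1) :=
    hu.continuousOn_derivWithin (uniqueDiffOn_Icc (by norm_num)) le_rfl
  have hdeg : (legendre n).derivative.natDegree ≤ p :=
    (natDegree_derivative_le _).trans (by have := natDegree_legendre_le n; omega)
  have hid := integral_derivWithin_mul_eval_eq_of_orthogonal (by norm_num) hu horth hdeg
    (integral_eval_mul_legendre_eq_zero
      ((degree_derivative_lt_of_natDegree_le hP).trans_le (by exact_mod_cast hpn)))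
  rw [legendre_eval_one, legendre_eval_neg_one, mul_one, mul_comm] at hid
  rw [← hid, ← integral_legendre_sq]
  exact abs_intervalIntegral_mul_le (by norm_num) hu' (legendre n).continuous.continuousOn

/-- Boundary hp-approximation estimate for the L²-orthogonal projection on the
reference interval: there is `C > 0` such that for every `p` and every `u`
continuously differentiable on `[-1, 1]`, if `P` is the L²(-1,1)-orthogonal
projection of `u` onto polynomials of degree at most `p`, then
`|u(±1) - P(±1)| ≤ C (p+1)^{-1/2} ‖u'‖_{L²(-1,1)}`. -/
theorem boundary_hp_estimate_L2_projection :
    ∃ C : ℝ, 0 < C ∧ ∀ (p : ℕ) (u : ℝ → ℝ),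
      ContDiffOn ℝ 1 u (Set.Icc (-1 : ℝ) 1) →
      ∀ P : Polynomial ℝ, P.natDegree ≤ p →
      (∀ r : Polynomial ℝ, r.natDegree ≤ p →
        ∫ x in (-1 : ℝ)..1, (u x - P.eval x) * r.eval x = 0) →
      |u 1 - P.eval 1| ≤
          C / Real.sqrt ((p : ℝ) + 1) *
            Real.sqrt
              (∫ x in (-1 : ℝ)..1, (derivWithin u (Set.Icc (-1 : ℝ) 1) x) ^ 2) ∧
        |u (-1) - P.eval (-1)| ≤
          C / Real.sqrt ((p : ℝ) + 1) *
            Real.sqrt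
              (∫ x in (-1 : ℝ)..1, (derivWithin u (Set.Icc (-1 : ℝ) 1) x) ^ 2) := by
  refine ⟨√2, by positivity, fun p u hu P hP horth => ?_⟩
  have hbound : ∀ n, p ≤ n → n ≤ p + 1 →
      |(u 1 - P.eval 1) - (-1) ^ n * (u (-1) - P.eval (-1))| ≤ √2 / √(p + 1) *
        √(∫ x in (-1 : ℝ)..1, (derivWithin u (Icc (-1 : ℝ) 1) x) ^ 2) := by
    intro n hpn hnp
    have hpn' : (p : ℝ) ≤ n := by exact_mod_cast hpn
    refine (abs_sub_neg_one_pow_mul_le_of_orthogonal hpn hnp hu hP horth).trans ?_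
    rw [← Real.sqrt_div' _ (by positivity : (0 : ℝ) ≤ p + 1), mul_comm]
    gcongr
    linarith
  obtain ⟨hA, hB⟩ := abs_le_of_abs_sub_le_of_abs_add_le (hbound p le_rfl p.le_succ)
    (by simpa [pow_succ] using hbound (p + 1) p.le_succ le_rfl)
  exact ⟨hA, by rwa [abs_mul, abs_pow, abs_neg, abs_one, one_pow, one_mul] at hB⟩
end

section
/- There exists a constant C > 0 such that the following holds: for all real numbers a < b, every function b : ℝ → ℝ that is Lipschitz continuous on [a, b] with Lipschitz constant L, every natural number p, every real polynomial q of degree at most p, every continuous u : ℝ → ℝ on [a, b], and every polynomial P of degree at most p with ∫_{a}^{b} (u - P) r dx = 0 for every polynomial r of degree at most p, one has | ∫_{a}^{b} b(x) q'(x) (u(x) - P(x)) dx | ≤ C L (p+1)^2 ‖q‖_{L²(a,b)} ‖u - P‖_{L²(a,b)}. -/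
/-!
Since `f a • q'` has degree `≤ p`, orthogonality lets us replace `f` by `f - f a`, which is
bounded by `L (b - a)` on `[a, b]`; Cauchy–Schwarz then reduces the claim to the inverse estimate
`(b - a) ‖q'‖ ≤ 2 (p + 1)² ‖q‖` in `L²(a, b)`. For the latter, expand `q` in the Legendre
polynomials `Rₙ` of `[a, b]`, given by Rodrigues' formula. They are orthogonal, and integrating
by parts expresses both `‖Rₙ‖²` and `‖Rₙ'‖²` through boundary values, which gives
`(b - a)² ‖Rₙ'‖² = 2n(n + 1)(2n + 1) ‖Rₙ‖²`. Summing over `n ≤ p` (with the crude bound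
`‖∑ yₙ‖² ≤ (p + 1) ∑ ‖yₙ‖²`) yields the estimate.
-/

open Polynomial Finset MeasureTheory
open scoped Nat

namespace LinearMap.BilinForm

variable {R M ι : Type*} [CommRing R] [AddCommGroup M] [Module R M]
  {B : LinearMap.BilinForm R M}

lemma apply_sum_sum_of_pairwise_eq_zero (s : Finset ι) (y : ι → M)
    (horth : ∀ i ∈ s, ∀ j ∈ s, i ≠ j → B (y i) (y j) = 0) :
    B (∑ i ∈ s, y i) (∑ i ∈ s, y i) = ∑ i ∈ s, B (y i) (y i) := by
  simp only [map_sum, LinearMap.sum_apply]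
  refine sum_congr rfl fun i hi => ?_
  rw [sum_eq_single_of_mem i hi fun j hj hji => horth j hj i hi hji]

variable [LinearOrder R] [IsStrictOrderedRing R]

lemma two_mul_apply_le_add (hB : B.IsPosSemidef) (x y : M) :
    2 * B x y ≤ B x x + B y y := by
  have h := hB.isNonneg.nonneg (x - y)
  simp only [map_sub, LinearMap.sub_apply, hB.isSymm.eq y x] at h
  linarith

lemma apply_sum_sum_le_card_mul (hB : B.IsPosSemidef) (s : Finset ι) (y : ι → M) :
    B (∑ i ∈ s, y i) (∑ i ∈ s, y i) ≤ #s * ∑ i ∈ s, B (y i) (y i) := by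
  have hpair : ∀ i j, 2 * B (y i) (y j) ≤ B (y i) (y i) + B (y j) (y j) :=
    fun i j => two_mul_apply_le_add hB _ _
  simp only [map_sum, LinearMap.sum_apply]
  have h := sum_le_sum fun i (_ : i ∈ s) => sum_le_sum fun j (_ : j ∈ s) => hpair i j
  simp only [sum_add_distrib, sum_const, nsmul_eq_mul, ← mul_sum] at h
  rw [sum_comm]
  linarith

end LinearMap.BilinForm

lemma abs_integral_mul_le_sqrt_mul_sqrt {α : Type*} [MeasurableSpace α] {μ : Measure α}
    {f g : α → ℝ} (hf : Integrable (fun x => f x ^ 2) μ) (hg : Integrable (fun x => g x ^ 2) μ)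
    (hfg : Integrable (fun x => f x * g x) μ) :
    |∫ x, f x * g x ∂μ| ≤ √(∫ x, f x ^ 2 ∂μ) * √(∫ x, g x ^ 2 ∂μ) := by
  have hquad (t : ℝ) : 0 ≤ (∫ x, f x ^ 2 ∂μ) * (t * t) + 2 * (∫ x, f x * g x ∂μ) * t +
      ∫ x, g x ^ 2 ∂μ := by
    have hexp : ∫ x, (t * f x + g x) ^ 2 ∂μ =
        ∫ x, (t * t * f x ^ 2 + 2 * t * (f x * g x) + g x ^ 2) ∂μ :=
      integral_congr_ae (Filter.Eventually.of_forall fun x => by ring)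
    have hint : Integrable (fun x => t * t * f x ^ 2 + 2 * t * (f x * g x)) μ :=
      (hf.const_mul _).add (hfg.const_mul _)
    rw [integral_add hint hg,
      integral_add (hf.const_mul _) (hfg.const_mul _), integral_const_mul,
      integral_const_mul] at hexp
    have hnonneg : 0 ≤ ∫ x, (t * f x + g x) ^ 2 ∂μ := integral_nonneg fun x => sq_nonneg _
    linarith
  have hdisc := discrim_le_zero hquad
  rw [discrim] at hdisc
  rw [← Real.sqrt_mul (integral_nonneg fun x => sq_nonneg (f x))]
  exact Real.abs_le_sqrt (by nlinarith)

lemma abs_intervalIntegral_mul_le_sqrt_mul_sqrt {a b : ℝ} (hab : a ≤ b) {f g : ℝ → ℝ}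
    (hf : IntervalIntegrable (fun x => f x ^ 2) volume a b)
    (hg : IntervalIntegrable (fun x => g x ^ 2) volume a b)
    (hfg : IntervalIntegrable (fun x => f x * g x) volume a b) :
    |∫ x in a..b, f x * g x| ≤ √(∫ x in a..b, f x ^ 2) * √(∫ x in a..b, g x ^ 2) := by
  simp only [intervalIntegral.integral_of_le hab]
  exact abs_integral_mul_le_sqrt_mul_sqrt hf.1 hg.1 hfg.1

lemma sqrt_intervalIntegral_mul_sq_le {a b M : ℝ} (hab : a ≤ b) (hM : 0 ≤ M) {g h : ℝ → ℝ}
    (hg : ∀ x ∈ Set.Icc a b, |g x| ≤ M)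
    (hgh : IntervalIntegrable (fun x => (g x * h x) ^ 2) volume a b)
    (hh : IntervalIntegrable (fun x => h x ^ 2) volume a b) :
    √(∫ x in a..b, (g x * h x) ^ 2) ≤ M * √(∫ x in a..b, h x ^ 2) := by
  have hmono : ∫ x in a..b, (g x * h x) ^ 2 ≤ ∫ x in a..b, M ^ 2 * h x ^ 2 := by
    refine intervalIntegral.integral_mono_on hab hgh (hh.const_mul _) fun x hx => ?_
    rw [mul_pow]
    gcongr ?_ * _
    exact sq_le_sq' (abs_le.mp (hg x hx)).1 (abs_le.mp (hg x hx)).2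
  rw [intervalIntegral.integral_const_mul] at hmono
  calc √(∫ x in a..b, (g x * h x) ^ 2) ≤ √(M ^ 2 * ∫ x in a..b, h x ^ 2) := Real.sqrt_le_sqrt hmono
    _ = M * √(∫ x in a..b, h x ^ 2) := by rw [Real.sqrt_mul (sq_nonneg M), Real.sqrt_sq hM]

noncomputable def polyIntegral (a b : ℝ) : ℝ[X] →ₗ[ℝ] ℝ where
  toFun p := ∫ x in a..b, p.eval x
  map_add' p q := by
    simpa only [eval_add] using intervalIntegral.integral_add
      (p.continuous.intervalIntegrable a b) (q.continuous.intervalIntegrable a b)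
  map_smul' c p := by simp

noncomputable def polyL2 (a b : ℝ) : LinearMap.BilinForm ℝ ℝ[X] :=
  (LinearMap.mul ℝ ℝ[X]).compr₂ (polyIntegral a b)

lemma polyL2_apply (a b : ℝ) (p q : ℝ[X]) :
    polyL2 a b p q = ∫ x in a..b, p.eval x * q.eval x := by
  simp [polyL2, polyIntegral]

lemma polyL2_isSymm (a b : ℝ) : (polyL2 a b).IsSymm where
  eq p q := by simp only [polyL2, LinearMap.compr₂_apply, LinearMap.mul_apply', mul_comm]

lemma polyL2_isPosSemidef {a b : ℝ} (hab : a ≤ b) : (polyL2 a b).IsPosSemidef where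
  isSymm := polyL2_isSymm a b
  nonneg p := by
    rw [polyL2_apply]
    exact intervalIntegral.integral_nonneg hab fun x _ => mul_self_nonneg _

lemma polyIntegral_derivative (a b : ℝ) (p : ℝ[X]) :
    polyIntegral a b (derivative p) = p.eval b - p.eval a :=
  intervalIntegral.integral_eq_sub_of_hasDerivAt (fun x _ => p.hasDerivAt x)
    (p.derivative.continuous.intervalIntegrable a b)

lemma polyL2_derivative_left (a b : ℝ) (s t : ℝ[X]) :
    polyL2 a b (derivative s) t =
      s.eval b * t.eval b - s.eval a * t.eval a - polyL2 a b s (derivative t) := by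
  have h := polyIntegral_derivative a b (s * t)
  rw [derivative_mul, map_add] at h
  simp only [polyL2, LinearMap.compr₂_apply, LinearMap.mul_apply', eval_mul] at h ⊢
  linarith

lemma polyL2_iterate_derivative_left (a b : ℝ) (m : ℕ) {A : ℝ[X]}
    (hA : ∀ k < m, (derivative^[k] A).eval a = 0 ∧ (derivative^[k] A).eval b = 0) (g : ℝ[X]) :
    polyL2 a b (derivative^[m] A) g = (-1) ^ m * polyL2 a b A (derivative^[m] g) := by
  induction m generalizing A with
  | zero => simp
  | succ m ih =>
    obtain ⟨ha, hb⟩ := hA 0 m.succ_pos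
    rw [Function.iterate_succ_apply, ih fun k hk => hA (k + 1) (by omega),
      polyL2_derivative_left, ← Function.iterate_succ_apply' derivative]
    simp only [Function.iterate_zero_apply] at ha hb
    rw [ha, hb]
    ring

section
variable {R : Type*} [CommRing R]

lemma eval_iterate_derivative_eq_zero_of_pow_dvd {p : R[X]} {c : R} {n k : ℕ}
    (h : (X - C c) ^ n ∣ p) (hk : k < n) : (derivative^[k] p).eval c = 0 :=
  dvd_iff_isRoot.mp <| (dvd_pow_self _ (Nat.sub_ne_zero_of_lt hk)).trans
    (pow_sub_dvd_iterate_derivative_of_pow_dvd k h)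

lemma eval_iterate_derivative_X_sub_C_pow_of_ne (c : R) {n j : ℕ} (hj : j ≠ n) :
    (derivative^[j] ((X - C c) ^ n)).eval c = 0 := by
  rw [iterate_derivative_X_sub_pow, eval_smul, eval_pow, eval_sub, eval_X, eval_C, sub_self]
  rcases lt_or_gt_of_ne hj with hj | hj
  · rw [zero_pow (by omega), smul_zero]
  · rw [Nat.descFactorial_eq_zero_iff_lt.mpr hj, zero_smul]

lemma eval_iterate_derivative_X_sub_C_pow_mul (c : R) (n k : ℕ) (G : R[X]) :
    (derivative^[n + k] ((X - C c) ^ n * G)).eval c =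
      ((n + k).choose k * n ! : R) * (derivative^[k] G).eval c := by
  rw [iterate_derivative_mul, eval_finsetSum,
    sum_eq_single_of_mem k (mem_range.mpr (by omega)) fun i hi hik => ?_]
  · rw [Nat.add_sub_cancel, iterate_derivative_X_sub_pow_self, nsmul_eq_mul, eval_mul,
      eval_mul, eval_natCast, eval_natCast, mul_assoc]
  · rw [mem_range] at hi
    rw [nsmul_eq_mul, eval_mul, eval_mul, eval_iterate_derivative_X_sub_C_pow_of_ne c (by omega),
      zero_mul, mul_zero]

lemma degree_X_sub_C_mul_derivative_sub_lt {p : R[X]} {n : ℕ} (c : R) (hp : p.natDegree ≤ n) :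
    ((X - C c) * derivative p - C (n : R) * p).degree < (n : WithBot ℕ) := by
  have hcoeff : ∀ k, n < k → p.coeff k = 0 := fun k hk => coeff_eq_zero_of_natDegree_lt (by omega)
  rw [degree_lt_iff_coeff_zero]
  intro m hm
  have hX : (X * derivative p).coeff m = m * p.coeff m := by
    rcases m with _ | m
    · simp
    · rw [coeff_X_mul, coeff_derivative]
      push_cast
      ring
  rw [coeff_sub, sub_mul, coeff_sub, coeff_C_mul, coeff_C_mul, hX, coeff_derivative,
    hcoeff (m + 1) (by omega)]
  rcases hm.eq_or_lt with rfl | hlt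
  · ring
  · rw [hcoeff m hlt]
    ring

end

/-- Rodrigues' formula: `rodrigues a b n` is `n! (b - a)ⁿ` times the Legendre polynomial `Pₙ`
transported from `[-1, 1]` to `[a, b]`. -/
noncomputable def rodrigues (a b : ℝ) (n : ℕ) : ℝ[X] :=
  derivative^[n] (((X - C a) * (X - C b)) ^ n)

lemma rodrigues_comm (a b : ℝ) (n : ℕ) : rodrigues a b n = rodrigues b a n := by
  rw [rodrigues, rodrigues, mul_comm]

lemma eval_rodrigues_right (a b : ℝ) (n : ℕ) :
    (rodrigues a b n).eval b = n ! * (b - a) ^ n := by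
  have h := eval_iterate_derivative_X_sub_C_pow_mul b n 0 ((X - C a) ^ n)
  rw [add_zero] at h
  rw [rodrigues, mul_comm (X - C a), mul_pow, h]
  simp

lemma eval_rodrigues_left (a b : ℝ) (n : ℕ) :
    (rodrigues a b n).eval a = n ! * (a - b) ^ n := by
  rw [rodrigues_comm, eval_rodrigues_right]

lemma sub_mul_eval_derivative_rodrigues_right (a b : ℝ) (n : ℕ) :
    (b - a) * (derivative (rodrigues a b n)).eval b = n * (n + 1) * (rodrigues a b n).eval b := by
  have h := eval_iterate_derivative_X_sub_C_pow_mul b n 1 ((X - C a) ^ n)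
  rw [eval_rodrigues_right, rodrigues, ← Function.iterate_succ_apply' derivative,
    mul_comm (X - C a), mul_pow, h, Function.iterate_one, derivative_X_sub_C_pow]
  rcases n with _ | n
  · simp
  · simp only [eval_mul, eval_C, eval_pow, eval_sub, eval_X, Nat.choose_one_right,
      Nat.factorial_succ, Nat.add_sub_cancel, pow_succ]
    push_cast
    ring

lemma sub_mul_eval_derivative_rodrigues_left (a b : ℝ) (n : ℕ) :
    (a - b) * (derivative (rodrigues a b n)).eval a = n * (n + 1) * (rodrigues a b n).eval a := by
  rw [rodrigues_comm, sub_mul_eval_derivative_rodrigues_right]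

lemma degree_rodrigues (a b : ℝ) (n : ℕ) : (rodrigues a b n).degree = n := by
  have hmonic : (((X - C a) * (X - C b)) ^ n).Monic :=
    ((monic_X_sub_C a).mul (monic_X_sub_C b)).pow n
  have hdeg : (((X - C a) * (X - C b)) ^ n).natDegree = n + n := by
    rw [natDegree_pow, natDegree_mul (X_sub_C_ne_zero a) (X_sub_C_ne_zero b),
      natDegree_X_sub_C, natDegree_X_sub_C]
    ring
  apply degree_eq_of_le_of_coeff_ne_zero
  · refine degree_le_of_natDegree_le ?_
    have := natDegree_iterate_derivative (((X - C a) * (X - C b)) ^ n) n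
    rw [rodrigues]
    omega
  · rw [rodrigues, coeff_iterate_derivative, ← hdeg, hmonic.coeff_natDegree, nsmul_one,
      Nat.cast_ne_zero, Ne, Nat.descFactorial_eq_zero_iff_lt]
    omega

lemma polyL2_rodrigues_of_degree_lt (a b : ℝ) (n : ℕ) {g : ℝ[X]} (hg : g.degree < n) :
    polyL2 a b (rodrigues a b n) g = 0 := by
  rw [rodrigues, polyL2_iterate_derivative_left a b n fun k hk =>
      ⟨eval_iterate_derivative_eq_zero_of_pow_dvd (by rw [mul_pow]; exact dvd_mul_right _ _) hk,
        eval_iterate_derivative_eq_zero_of_pow_dvd (by rw [mul_pow]; exact dvd_mul_left _ _) hk⟩,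
    iterate_derivative_eq_zero_of_degree_lt hg, map_zero, mul_zero]

/-- `(X - a) Rₙ' - n Rₙ` has degree `< n`, so it is orthogonal to `Rₙ`; integrate
`((X - a) Rₙ²)' = (2n + 1) Rₙ² + 2 Rₙ ((X - a) Rₙ' - n Rₙ)`. -/
lemma polyL2_rodrigues_self (a b : ℝ) (n : ℕ) :
    (2 * n + 1) * polyL2 a b (rodrigues a b n) (rodrigues a b n) =
      (b - a) * (rodrigues a b n).eval b ^ 2 := by
  set R := rodrigues a b n
  set S := (X - C a) * derivative R - C (n : ℝ) * R
  have hS : polyL2 a b R S = 0 :=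
    polyL2_rodrigues_of_degree_lt a b n (degree_X_sub_C_mul_derivative_sub_lt a
      (natDegree_le_of_degree_le (degree_rodrigues a b n).le))
  have hderiv : derivative ((X - C a) * R ^ 2) = C (2 * n + 1 : ℝ) * (R * R) + C 2 * (R * S) := by
    simp only [S, derivative_mul, derivative_pow, derivative_sub, derivative_X, derivative_C]
    simp only [C_add, C_mul, Nat.cast_ofNat, map_ofNat, C_1]
    ring
  have h := polyIntegral_derivative a b ((X - C a) * R ^ 2)
  rw [hderiv, map_add, ← smul_eq_C_mul, ← smul_eq_C_mul, map_smul, map_smul] at h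
  simp only [polyL2, LinearMap.compr₂_apply, LinearMap.mul_apply'] at hS ⊢
  simp only [smul_eq_mul, hS, mul_zero, add_zero, eval_mul, eval_sub, eval_X, eval_C, eval_pow,
    sub_self, zero_mul, sub_zero] at h
  linarith

/-- Since `Rₙ ⊥ Rₙ''`, integration by parts leaves `‖Rₙ'‖² = [Rₙ Rₙ']ₐᵇ`, and the boundary
values are compared with `‖Rₙ‖²` through `polyL2_rodrigues_self`. -/
lemma sq_sub_mul_polyL2_derivative_rodrigues (a b : ℝ) (n : ℕ) :
    (b - a) ^ 2 * polyL2 a b (derivative (rodrigues a b n)) (derivative (rodrigues a b n)) =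
      2 * n * (n + 1) * ((2 * n + 1) * polyL2 a b (rodrigues a b n) (rodrigues a b n)) := by
  set R := rodrigues a b n
  have hR : R ≠ 0 := fun h => by simpa [R, h] using degree_rodrigues a b n
  have hR'' : (derivative (derivative R)).degree < n :=
    calc (derivative (derivative R)).degree ≤ (derivative R).degree := degree_derivative_le
      _ < R.degree := degree_derivative_lt hR
      _ = n := degree_rodrigues a b n
  have hibp := polyL2_derivative_left a b R (derivative R)
  rw [polyL2_rodrigues_of_degree_lt a b n hR'', sub_zero] at hibp
  have hsq : R.eval a ^ 2 = R.eval b ^ 2 := by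
    rw [eval_rodrigues_left, eval_rodrigues_right, mul_pow, mul_pow, ← pow_mul, ← pow_mul,
      mul_comm n 2, pow_mul, pow_mul, show (a - b) ^ 2 = (b - a) ^ 2 by ring]
  linear_combination (b - a) ^ 2 * hibp + (b - a) * R.eval b *
    sub_mul_eval_derivative_rodrigues_right a b n + (b - a) * R.eval a *
    sub_mul_eval_derivative_rodrigues_left a b n + n * (n + 1) * (b - a) * hsq -
    2 * n * (n + 1) * polyL2_rodrigues_self a b n

lemma polyL2_rodrigues_of_ne (a b : ℝ) {m n : ℕ} (hmn : m ≠ n) :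
    polyL2 a b (rodrigues a b m) (rodrigues a b n) = 0 := by
  rcases lt_or_gt_of_ne hmn with h | h
  · rw [(polyL2_isSymm a b).eq]
    exact polyL2_rodrigues_of_degree_lt a b n (by rw [degree_rodrigues]; exact_mod_cast h)
  · exact polyL2_rodrigues_of_degree_lt a b m (by rw [degree_rodrigues]; exact_mod_cast h)

lemma exists_eq_sum_smul_rodrigues (a b : ℝ) {p : ℕ} {q : ℝ[X]} (hq : q.natDegree ≤ p) :
    ∃ s : Finset ℕ, (∀ n ∈ s, n ≤ p) ∧ ∃ c : ℕ → ℝ, q = ∑ n ∈ s, c n • rodrigues a b n := by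
  let S : Sequence ℝ := ⟨rodrigues a b, degree_rodrigues a b⟩
  have hmem : q ∈ Submodule.span ℝ (rodrigues a b '' Set.Iic p) := by
    rw [S.span_degreeLE fun n _ => (leadingCoeff_ne_zero.mpr (S.ne_zero n)).isUnit,
      mem_degreeLE]
    exact degree_le_of_natDegree_le hq
  obtain ⟨c, hc, rfl⟩ := (Finsupp.mem_span_image_iff_linearCombination ℝ).mp hmem
  exact ⟨c.support, fun n hn => hc hn, c, rfl⟩

theorem sq_sub_mul_polyL2_derivative_le {a b : ℝ} (hab : a < b) {p : ℕ} {q : ℝ[X]}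
    (hq : q.natDegree ≤ p) :
    (b - a) ^ 2 * polyL2 a b (derivative q) (derivative q) ≤ 4 * (p + 1) ^ 4 * polyL2 a b q q := by
  obtain ⟨s, hs, c, rfl⟩ := exists_eq_sum_smul_rodrigues a b hq
  have hB := polyL2_isPosSemidef hab.le
  have hcard : (#s : ℝ) ≤ p + 1 := by
    exact_mod_cast (card_le_card fun n hn => mem_range.mpr (Nat.lt_succ_of_le (hs n hn))).trans
      (card_range (p + 1)).le
  have hmode : ∀ n ∈ s, (2 * n * (n + 1) * (2 * n + 1) : ℝ) ≤ 4 * (p + 1) ^ 3 := by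
    intro n hn
    have : (n : ℝ) ≤ p := by exact_mod_cast hs n hn
    calc (2 * n * (n + 1) * (2 * n + 1) : ℝ) ≤ 2 * (p + 1) * (p + 1) * (2 * (p + 1)) := by
          gcongr <;> linarith
      _ = 4 * (p + 1) ^ 3 := by ring
  calc (b - a) ^ 2 * polyL2 a b (derivative (∑ n ∈ s, c n • rodrigues a b n))
        (derivative (∑ n ∈ s, c n • rodrigues a b n))
      ≤ (b - a) ^ 2 * ((#s : ℝ) * ∑ n ∈ s, polyL2 a b (c n • derivative (rodrigues a b n))
          (c n • derivative (rodrigues a b n))) := by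
        rw [derivative_sum]
        simp only [derivative_smul]
        gcongr
        exact LinearMap.BilinForm.apply_sum_sum_le_card_mul hB s _
    _ = (#s : ℝ) * ∑ n ∈ s, c n ^ 2 * (2 * n * (n + 1) * (2 * n + 1) *
          polyL2 a b (rodrigues a b n) (rodrigues a b n)) := by
        simp only [map_smul, LinearMap.smul_apply, smul_eq_mul, mul_sum]
        refine sum_congr rfl fun n _ => ?_
        linear_combination (#s * c n ^ 2 : ℝ) * sq_sub_mul_polyL2_derivative_rodrigues a b n
    _ ≤ ((p : ℝ) + 1) * ∑ n ∈ s, c n ^ 2 * (4 * ((p : ℝ) + 1) ^ 3 *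
          polyL2 a b (rodrigues a b n) (rodrigues a b n)) := by
        have hD : ∀ n, 0 ≤ polyL2 a b (rodrigues a b n) (rodrigues a b n) :=
          fun n => hB.isNonneg.nonneg _
        gcongr ?_ * ∑ n ∈ s, _ * (?_ * _) with n hn
        · exact sum_nonneg fun n _ => mul_nonneg (sq_nonneg _) (mul_nonneg (by positivity) (hD n))
        · exact hD n
        · exact hmode n hn
    _ = 4 * ((p : ℝ) + 1) ^ 4 * polyL2 a b (∑ n ∈ s, c n • rodrigues a b n)
          (∑ n ∈ s, c n • rodrigues a b n) := by
        rw [LinearMap.BilinForm.apply_sum_sum_of_pairwise_eq_zero s _ fun m _ n _ hmn => by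
          simp [polyL2_rodrigues_of_ne a b hmn]]
        simp only [map_smul, LinearMap.smul_apply, smul_eq_mul, mul_sum]
        refine sum_congr rfl fun n _ => ?_
        ring

theorem sub_mul_sqrt_integral_derivative_sq_le {a b : ℝ} (hab : a < b) {p : ℕ} {q : ℝ[X]}
    (hq : q.natDegree ≤ p) :
    (b - a) * √(∫ x in a..b, (derivative q).eval x ^ 2) ≤
      2 * (p + 1) ^ 2 * √(∫ x in a..b, q.eval x ^ 2) := by
  have h := sq_sub_mul_polyL2_derivative_le hab hq
  simp only [polyL2_apply, ← sq] at h
  calc (b - a) * √(∫ x in a..b, (derivative q).eval x ^ 2)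
      = √((b - a) ^ 2 * ∫ x in a..b, (derivative q).eval x ^ 2) := by
        rw [Real.sqrt_mul (sq_nonneg _), Real.sqrt_sq (sub_pos.mpr hab).le]
    _ ≤ √(4 * (p + 1) ^ 4 * ∫ x in a..b, q.eval x ^ 2) := Real.sqrt_le_sqrt h
    _ = 2 * (p + 1) ^ 2 * √(∫ x in a..b, q.eval x ^ 2) := by
        rw [Real.sqrt_mul (by positivity),
          show (4 * (p + 1) ^ 4 : ℝ) = (2 * (p + 1) ^ 2) ^ 2 by ring, Real.sqrt_sq (by positivity)]

theorem abs_intervalIntegral_mul_derivative_mul_le {a b L : ℝ} (hab : a < b) {g η : ℝ → ℝ}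
    (hg : ContinuousOn g (Set.Icc a b)) (hgL : ∀ x ∈ Set.Icc a b, |g x| ≤ L * (b - a))
    (hη : ContinuousOn η (Set.Icc a b)) {p : ℕ} {q : ℝ[X]} (hq : q.natDegree ≤ p) :
    |∫ x in a..b, g x * (derivative q).eval x * η x| ≤
      2 * L * (p + 1) ^ 2 * √(∫ x in a..b, q.eval x ^ 2) * √(∫ x in a..b, η x ^ 2) := by
  have hM : 0 ≤ L * (b - a) := (abs_nonneg _).trans (hgL a (Set.left_mem_Icc.mpr hab.le))
  have hL : 0 ≤ L := nonneg_of_mul_nonneg_left hM (sub_pos.mpr hab)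
  have hint (v : ℝ → ℝ) (hv : ContinuousOn v (Set.Icc a b)) : IntervalIntegrable v volume a b :=
    hv.intervalIntegrable_of_Icc hab.le
  calc _ ≤ √(∫ x in a..b, (g x * (derivative q).eval x) ^ 2) * √(∫ x in a..b, η x ^ 2) :=
        abs_intervalIntegral_mul_le_sqrt_mul_sqrt hab.le (hint _ (by fun_prop))
          (hint _ (by fun_prop)) (hint _ (by fun_prop))
    _ ≤ L * (b - a) * √(∫ x in a..b, (derivative q).eval x ^ 2) * √(∫ x in a..b, η x ^ 2) := by
        gcongr
        exact sqrt_intervalIntegral_mul_sq_le hab.le hM hgL (hint _ (by fun_prop))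
          (hint _ (by fun_prop))
    _ ≤ L * (2 * (p + 1) ^ 2 * √(∫ x in a..b, q.eval x ^ 2)) * √(∫ x in a..b, η x ^ 2) := by
        rw [mul_assoc L]
        gcongr L * ?_ * _
        exact sub_mul_sqrt_integral_derivative_sq_le hab hq
    _ = _ := by ring

/-- General one-dimensional bound on the convection term `T₂` for a Lipschitz
coefficient: there is `C > 0` such that for every interval `(a, b)`, every `f`
Lipschitz on `[a, b]` with constant `L`, every polynomial `q` of degree at most
`p`, and every L²(a,b)-orthogonal projection `P` of a continuous `u` onto
polynomials of degree at most `p`,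
`|∫_a^b f q' (u - P)| ≤ C L (p+1)^2 ‖q‖_{L²(a,b)} ‖u - P‖_{L²(a,b)}`. -/
theorem general_T2_bound_one_dimensional :
    ∃ C : ℝ, 0 < C ∧ ∀ (a b : ℝ), a < b → ∀ (f : ℝ → ℝ) (L : ℝ),
      (∀ x ∈ Set.Icc a b, ∀ y ∈ Set.Icc a b, |f x - f y| ≤ L * |x - y|) →
      ∀ (p : ℕ) (q : Polynomial ℝ), q.natDegree ≤ p →
      ∀ u : ℝ → ℝ, ContinuousOn u (Set.Icc a b) →
      ∀ P : Polynomial ℝ, P.natDegree ≤ p →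
      (∀ r : Polynomial ℝ, r.natDegree ≤ p →
        ∫ x in a..b, (u x - P.eval x) * r.eval x = 0) →
      |∫ x in a..b, f x * q.derivative.eval x * (u x - P.eval x)| ≤
        C * L * ((p : ℝ) + 1) ^ 2 *
          Real.sqrt (∫ x in a..b, (q.eval x) ^ 2) *
          Real.sqrt (∫ x in a..b, (u x - P.eval x) ^ 2) := by
  refine ⟨2, two_pos, fun a b hab f L hf p q hq u hu P _ horth => ?_⟩
  have ha : a ∈ Set.Icc a b := Set.left_mem_Icc.mpr hab.le
  have hL : 0 ≤ L := nonneg_of_mul_nonneg_left ((abs_nonneg _).trans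
    (hf b (Set.right_mem_Icc.mpr hab.le) a ha)) (abs_pos.mpr (sub_ne_zero.mpr hab.ne'))
  have hfc : ContinuousOn f (Set.Icc a b) :=
    (LipschitzOnWith.of_dist_le_mul (K := ⟨L, hL⟩) fun x hx y hy => hf x hx y hy).continuousOn
  have hosc : ∀ x ∈ Set.Icc a b, |f x - f a| ≤ L * (b - a) := fun x hx =>
    (hf x hx a ha).trans (by rw [abs_of_nonneg (sub_nonneg.mpr hx.1)]; gcongr; exact hx.2)
  have hmean : ∫ x in a..b, f x * q.derivative.eval x * (u x - P.eval x) =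
      ∫ x in a..b, (f x - f a) * q.derivative.eval x * (u x - P.eval x) := by
    have hq' := horth _ ((natDegree_derivative_le q).trans (Nat.sub_le_of_le_add (by omega)))
    rw [← sub_eq_zero, ← intervalIntegral.integral_sub
      (ContinuousOn.intervalIntegrable_of_Icc hab.le (by fun_prop))
      (ContinuousOn.intervalIntegrable_of_Icc hab.le (by fun_prop))]
    calc _ = ∫ x in a..b, f a * ((u x - P.eval x) * q.derivative.eval x) :=
          intervalIntegral.integral_congr fun x _ => by ring
      _ = 0 := by rw [intervalIntegral.integral_const_mul, hq', mul_zero]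
  rw [hmean]
  exact abs_intervalIntegral_mul_derivative_mul_le hab (by fun_prop) hosc (by fun_prop) hq
end
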